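/- Let g_c, δ_r, δ_c ∈ ℝ^d and β ∈ (0,1]. Assume ⟨g_c, δ_c⟩ ≤ 0 and ⟨g_c, δ_c⟩ ≤ ⟨g_c, δ_r⟩, and set ε := −β·⟨g_c, δ_c⟩. Then the SB-TRPO update direction δ := (1−μ*)·δ_r + μ*·δ_c satisfies ⟨g_c, δ⟩ ≤ β·⟨g_c, δ_c⟩ ≤ 0. -/

import Mathlib

/-! When `μ*` is given by the quotient, it is exactly the coefficient making the linear function
`μ ↦ ⟨g_c, δ_μ⟩` hit `-ε`; otherwise `μ* = 0` and `δ_μ* = δ_r`, which meets `-ε` either because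
`⟨g_c, δ_r⟩ < -ε` or because `⟨g_c, δ_r⟩ = ⟨g_c, δ_c⟩`. So `⟨g_c, δ_μ*⟩ ≤ -ε` as soon as
`⟨g_c, δ_c⟩ ≤ -ε`, and for `ε = -β⟨g_c, δ_c⟩` this is `(1 - β)⟨g_c, δ_c⟩ ≤ 0`. -/

open Matrix

/-- The safety-biased coefficient `μ*` from the SB-TRPO update:
`μ* := (⟨g_c,δ_r⟩ + ε)/(⟨g_c,δ_r⟩ − ⟨g_c,δ_c⟩)` if
`⟨g_c,δ_c⟩ ≠ ⟨g_c,δ_r⟩` and `⟨g_c,δ_r⟩ ≥ −ε`, and `μ* := 0` otherwise. -/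
noncomputable def mustar {d : ℕ} (gc δr δc : Fin d → ℝ) (ε : ℝ) : ℝ :=
  if gc ⬝ᵥ δc ≠ gc ⬝ᵥ δr ∧ gc ⬝ᵥ δr ≥ -ε then
    (gc ⬝ᵥ δr + ε) / (gc ⬝ᵥ δr - gc ⬝ᵥ δc)
  else 0

theorem dotProduct_sub_smul_add_smul {n R : Type*} [Fintype n] [CommRing R] (g x y : n → R)
    (μ : R) : g ⬝ᵥ ((1 - μ) • x + μ • y) = (1 - μ) * (g ⬝ᵥ x) + μ * (g ⬝ᵥ y) := by
  simp only [dotProduct_add, dotProduct_smul, smul_eq_mul]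

theorem dotProduct_mix_mustar_le {d : ℕ} (gc δr δc : Fin d → ℝ) (ε : ℝ)
    (hδc : gc ⬝ᵥ δc ≤ -ε) :
    gc ⬝ᵥ ((1 - mustar gc δr δc ε) • δr + mustar gc δr δc ε • δc) ≤ -ε := by
  rw [dotProduct_sub_smul_add_smul, mustar]
  split_ifs with hμ
  · have hgap : gc ⬝ᵥ δr - gc ⬝ᵥ δc ≠ 0 := sub_ne_zero.mpr (Ne.symm hμ.1)
    refine le_of_eq ?_
    field_simp
    ring
  · rw [zero_mul, add_zero, sub_zero, one_mul]
    rcases eq_or_ne (gc ⬝ᵥ δc) (gc ⬝ᵥ δr) with heq | hne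
    · exact heq ▸ hδc
    · exact (not_le.mp fun h ↦ hμ ⟨hne, h⟩).le

theorem stmt6_general {d : ℕ} (gc δr δc : Fin d → ℝ) (β : ℝ) (hβ0 : 0 < β) (hβ1 : β ≤ 1)
    (h1 : gc ⬝ᵥ δc ≤ 0) :
    gc ⬝ᵥ ((1 - mustar gc δr δc (-β * (gc ⬝ᵥ δc))) • δr
            + mustar gc δr δc (-β * (gc ⬝ᵥ δc)) • δc) ≤ β * (gc ⬝ᵥ δc) ∧
    β * (gc ⬝ᵥ δc) ≤ 0 := by
  have hshrink : (1 - β) * (gc ⬝ᵥ δc) ≤ 0 := mul_nonpos_of_nonneg_of_nonpos (by linarith) h1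
  refine ⟨?_, mul_nonpos_of_nonneg_of_nonpos hβ0.le h1⟩
  exact (dotProduct_mix_mustar_le gc δr δc _ (by linarith)).trans_eq (by ring)

/-- With `ε := −β⟨g_c,δ_c⟩` and `β ∈ (0,1]`, under
`⟨g_c,δ_c⟩ ≤ 0` and `⟨g_c,δ_c⟩ ≤ ⟨g_c,δ_r⟩`, the SB-TRPO update direction
`δ := (1−μ*)δ_r + μ*δ_c` satisfies `⟨g_c, δ⟩ ≤ β⟨g_c,δ_c⟩ ≤ 0`. -/
theorem stmt6 {d : ℕ} (gc δr δc : Fin d → ℝ) (β : ℝ) (hβ0 : 0 < β) (hβ1 : β ≤ 1)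
    (h1 : gc ⬝ᵥ δc ≤ 0) (h2 : gc ⬝ᵥ δc ≤ gc ⬝ᵥ δr) :
    gc ⬝ᵥ ((1 - mustar gc δr δc (-β * (gc ⬝ᵥ δc))) • δr
            + mustar gc δr δc (-β * (gc ⬝ᵥ δc)) • δc) ≤ β * (gc ⬝ᵥ δc) ∧
    β * (gc ⬝ᵥ δc) ≤ 0 :=
  stmt6_general gc δr δc β hβ0 hβ1 h1
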